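/- arXiv:1201.5538 — 3 statements merged into one kernel-verified Lean document; each statement's English description precedes it below -/
import Mathlib

section
/- Suppose F : ℝ_μ → ℝ_μ has second-order partial derivatives in a μ-ball of radius δ around x, with |D_{kl}F^j(z)| ≤ v_{jkl} on this ball and ∑_j μ(j) v_{jkl} ≤ K_{F2} μ(k)μ(l). Then for any h with ‖h‖_μ ≤ δ, ‖F(x+h) − F(x) − DF(x)[h]‖_μ ≤ K_{F2} ‖h‖_μ². -/
/-- Second-order Taylor remainder bound in the weighted `ℓ¹` norm
`‖ξ‖_μ = ∑_j μ(j) |ξ^j|`.  `F` is given componentwise, `D1 z j k = D_k F^j(z)` are its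
first-order partial derivatives and `D2 z j k l = D_{kl} F^j(z)` its second-order partial
derivatives, acting as directional derivatives along the increment `h`. -/
theorem taylor_remainder_mu_norm_bound
    (μ : ℕ → ℝ) (hμ : ∀ j, 1 ≤ μ j)
    (F : (ℕ → ℝ) → ℕ → ℝ) (D1 : (ℕ → ℝ) → ℕ → ℕ → ℝ) (D2 : (ℕ → ℝ) → ℕ → ℕ → ℕ → ℝ)
    (v : ℕ → ℕ → ℕ → ℝ) (KF2 δ : ℝ) (hδ : 0 < δ)
    (x h : ℕ → ℝ)
    (hh : Summable (fun j => μ j * |h j|))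
    (hhδ : ∑' j, μ j * |h j| ≤ δ)
    -- first-order directional derivative of each component along `h`
    (hD1 : ∀ j : ℕ, ∀ θ ∈ Set.Icc (0:ℝ) 1,
      HasDerivAt (fun t : ℝ => F (fun k => x k + t * h k) j)
        (∑' k : ℕ, D1 (fun k => x k + θ * h k) j k * h k) θ)
    -- second-order directional derivative of each component along `h`
    (hD2 : ∀ j k : ℕ, ∀ θ ∈ Set.Icc (0:ℝ) 1,
      HasDerivAt (fun t : ℝ => D1 (fun m => x m + t * h m) j k)
        (∑' l : ℕ, D2 (fun m => x m + θ * h m) j k l * h l) θ)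
    -- bound on second-order partial derivatives in the ball of radius `δ` around `x`
    (hv : ∀ j k l : ℕ, ∀ z : ℕ → ℝ,
      (∑' m, μ m * |z m - x m|) ≤ δ → |D2 z j k l| ≤ v j k l)
    (hvsum : ∀ k l, Summable (fun j => μ j * v j k l))
    (hKF2 : ∀ k l, ∑' j, μ j * v j k l ≤ KF2 * μ k * μ l) :
    ∑' j, μ j * |F (fun k => x k + h k) j - F x j - ∑' k, D1 x j k * h k|
      ≤ KF2 * (∑' j, μ j * |h j|) ^ 2 := by
  set S : ℝ := ∑' j, μ j * |h j| with hSdef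
  have hμ0 : ∀ j, (0:ℝ) < μ j := fun j => lt_of_lt_of_le one_pos (hμ j)
  have hS0 : 0 ≤ S := tsum_nonneg fun j => mul_nonneg (hμ0 j).le (abs_nonneg _)
  -- v is nonnegative
  have hv0 : ∀ j k l, 0 ≤ v j k l := by
    intro j k l
    refine le_trans (abs_nonneg (D2 x j k l)) (hv j k l x ?_)
    simp [hδ.le]
  -- KF2 is nonnegative
  have hK0 : 0 ≤ KF2 := by
    have h1 : (0:ℝ) ≤ ∑' j, μ j * v j 0 0 :=
      tsum_nonneg fun j => mul_nonneg (hμ0 j).le (hv0 j 0 0)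
    have h2 := hKF2 0 0
    nlinarith [mul_pos (hμ0 0) (hμ0 0)]
  -- pointwise bound on v
  have hvle : ∀ j k l, v j k l ≤ KF2 * μ k * μ l := by
    intro j k l
    have h1 := Summable.le_tsum (hvsum k l) j (fun i _ => mul_nonneg (hμ0 i).le (hv0 i k l))
    have h2 := hKF2 k l
    nlinarith [hμ j, hv0 j k l, hμ0 j]
  -- points on the segment stay in the ball
  have hball : ∀ t ∈ Set.Icc (0:ℝ) 1,
      (∑' m, μ m * |(fun m => x m + t * h m) m - x m|) ≤ δ := by
    intro t ht
    have : ∀ m, μ m * |(x m + t * h m) - x m| = t * (μ m * |h m|) := by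
      intro m
      rw [add_sub_cancel_left, abs_mul, abs_of_nonneg ht.1]; ring
    calc (∑' m, μ m * |(x m + t * h m) - x m|) = ∑' m, t * (μ m * |h m|) := by
          simp only [this]
      _ = t * S := tsum_mul_left
      _ ≤ 1 * S := mul_le_mul_of_nonneg_right ht.2 hS0
      _ ≤ δ := by rw [one_mul]; exact hhδ
  -- A j k = ∑_l v_{jkl} |h_l|
  set A : ℕ → ℕ → ℝ := fun j k => ∑' l, v j k l * |h l| with hAdef
  have hA_sum : ∀ j k, Summable (fun l => v j k l * |h l|) := by
    intro j k
    refine Summable.of_nonneg_of_le (fun l => mul_nonneg (hv0 j k l) (abs_nonneg _))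
      (fun l => ?_) (hh.mul_left (KF2 * μ k))
    calc v j k l * |h l| ≤ (KF2 * μ k * μ l) * |h l| :=
          mul_le_mul_of_nonneg_right (hvle j k l) (abs_nonneg _)
      _ = KF2 * μ k * (μ l * |h l|) := by ring
  have hA0 : ∀ j k, 0 ≤ A j k :=
    fun j k => tsum_nonneg fun l => mul_nonneg (hv0 j k l) (abs_nonneg _)
  have hA_le : ∀ j k, A j k ≤ KF2 * μ k * S := by
    intro j k
    calc A j k ≤ ∑' l, KF2 * μ k * (μ l * |h l|) := by
          refine Summable.tsum_le_tsum (fun l => ?_) (hA_sum j k) (hh.mul_left (KF2 * μ k))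
          calc v j k l * |h l| ≤ (KF2 * μ k * μ l) * |h l| :=
                mul_le_mul_of_nonneg_right (hvle j k l) (abs_nonneg _)
            _ = KF2 * μ k * (μ l * |h l|) := by ring
      _ = KF2 * μ k * S := tsum_mul_left
  -- Step A: increment of D1 along the segment
  have hD1diff : ∀ j k, ∀ θ ∈ Set.Icc (0:ℝ) 1,
      |D1 (fun m => x m + θ * h m) j k - D1 x j k| ≤ A j k := by
    intro j k θ hθ
    have h0mem : (0:ℝ) ∈ Set.Icc (0:ℝ) 1 := by constructor <;> norm_num
    have key := (convex_Icc (0:ℝ) 1).norm_image_sub_le_of_norm_hasDerivWithin_le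
      (f := fun t : ℝ => D1 (fun m => x m + t * h m) j k)
      (f' := fun t : ℝ => ∑' l : ℕ, D2 (fun m => x m + t * h m) j k l * h l)
      (C := A j k)
      (fun t ht => (hD2 j k t ht).hasDerivWithinAt)
      (fun t ht => ?_) h0mem hθ
    · have hz0 : (fun m => x m + (0:ℝ) * h m) = x := by funext m; ring
      simp only [hz0] at key
      calc |D1 (fun m => x m + θ * h m) j k - D1 x j k|
          ≤ A j k * ‖θ - 0‖ := key
        _ ≤ A j k * 1 := by
            refine mul_le_mul_of_nonneg_left ?_ (hA0 j k)
            rw [sub_zero, Real.norm_eq_abs, abs_of_nonneg hθ.1]; exact hθ.2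
        _ = A j k := mul_one _
    · -- bound the second derivative
      rw [Real.norm_eq_abs]
      by_cases hsum : Summable (fun l => D2 (fun m => x m + t * h m) j k l * h l)
      · have habs : ∀ l, |D2 (fun m => x m + t * h m) j k l * h l| ≤ v j k l * |h l| := by
          intro l
          rw [abs_mul]
          exact mul_le_mul_of_nonneg_right (hv j k l _ (hball t ht)) (abs_nonneg _)
        have hsabs : Summable (fun l => |D2 (fun m => x m + t * h m) j k l * h l|) :=
          Summable.of_nonneg_of_le (fun l => abs_nonneg _) habs (hA_sum j k)
        calc |∑' l, D2 (fun m => x m + t * h m) j k l * h l|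
            ≤ ∑' l, |D2 (fun m => x m + t * h m) j k l * h l| := by
              simpa only [Real.norm_eq_abs] using norm_tsum_le_tsum_norm (f := fun l => D2 (fun m => x m + t * h m) j k l * h l) (by simpa only [Real.norm_eq_abs] using hsabs)
          _ ≤ A j k := Summable.tsum_le_tsum habs hsabs (hA_sum j k)
      · simp only [tsum_eq_zero_of_not_summable hsum, abs_zero]; exact hA0 j k
  -- B j = ∑_k A j k |h k|
  set B : ℕ → ℝ := fun j => ∑' k, A j k * |h k| with hBdef
  have hAh_sum : ∀ j, Summable (fun k => A j k * |h k|) := by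
    intro j
    refine Summable.of_nonneg_of_le (fun k => mul_nonneg (hA0 j k) (abs_nonneg _))
      (fun k => ?_) (hh.mul_left (KF2 * S))
    calc A j k * |h k| ≤ (KF2 * μ k * S) * |h k| :=
          mul_le_mul_of_nonneg_right (hA_le j k) (abs_nonneg _)
      _ = KF2 * S * (μ k * |h k|) := by ring
  have hB0 : ∀ j, 0 ≤ B j :=
    fun j => tsum_nonneg fun k => mul_nonneg (hA0 j k) (abs_nonneg _)
  -- Step B: bound on the derivative increment of the first-order term
  have hderiv_bound : ∀ j, ∀ t ∈ Set.Icc (0:ℝ) 1,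
      |(∑' k, D1 (fun m => x m + t * h m) j k * h k) - ∑' k, D1 x j k * h k| ≤ B j := by
    intro j t ht
    have hdiff_abs : ∀ k, |(D1 (fun m => x m + t * h m) j k - D1 x j k) * h k| ≤ A j k * |h k| := by
      intro k
      rw [abs_mul]
      exact mul_le_mul_of_nonneg_right (hD1diff j k t ht) (abs_nonneg _)
    have hdsum : Summable (fun k => (D1 (fun m => x m + t * h m) j k - D1 x j k) * h k) :=
      (Summable.of_nonneg_of_le (fun k => abs_nonneg _) hdiff_abs (hAh_sum j)).of_abs
    by_cases hc : Summable (fun k => D1 x j k * h k)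
    · have hzt : Summable (fun k => D1 (fun m => x m + t * h m) j k * h k) := by
        have := hdsum.add hc
        simpa [sub_mul] using this
      rw [← Summable.tsum_sub hzt hc]
      have hsabs : Summable (fun k => |(D1 (fun m => x m + t * h m) j k - D1 x j k) * h k|) :=
        Summable.of_nonneg_of_le (fun k => abs_nonneg _) hdiff_abs (hAh_sum j)
      calc |∑' k, (D1 (fun m => x m + t * h m) j k * h k - D1 x j k * h k)|
          = |∑' k, (D1 (fun m => x m + t * h m) j k - D1 x j k) * h k| := by
            congr 1; exact tsum_congr fun k => by ring
        _ ≤ ∑' k, |(D1 (fun m => x m + t * h m) j k - D1 x j k) * h k| := by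
            simpa only [Real.norm_eq_abs] using norm_tsum_le_tsum_norm (f := fun k => (D1 (fun m => x m + t * h m) j k - D1 x j k) * h k) (by simpa only [Real.norm_eq_abs] using hsabs)
        _ ≤ B j := Summable.tsum_le_tsum hdiff_abs hsabs (hAh_sum j)
    · have hzt : ¬ Summable (fun k => D1 (fun m => x m + t * h m) j k * h k) := by
        intro hzt
        apply hc
        have := hzt.sub hdsum
        simpa [sub_mul] using this
      rw [tsum_eq_zero_of_not_summable hc, tsum_eq_zero_of_not_summable hzt]
      simpa using hB0 j
  -- Step B conclusion: componentwise Taylor remainder bound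
  have hRj : ∀ j, |F (fun k => x k + h k) j - F x j - ∑' k, D1 x j k * h k| ≤ B j := by
    intro j
    set c : ℝ := ∑' k, D1 x j k * h k with hcdef
    have hz0 : (fun m => x m + (0:ℝ) * h m) = x := by funext m; ring
    have hz1 : (fun m => x m + (1:ℝ) * h m) = fun k => x k + h k := by funext m; ring
    have h0mem : (0:ℝ) ∈ Set.Icc (0:ℝ) 1 := by constructor <;> norm_num
    have h1mem : (1:ℝ) ∈ Set.Icc (0:ℝ) 1 := by constructor <;> norm_num
    have key := (convex_Icc (0:ℝ) 1).norm_image_sub_le_of_norm_hasDerivWithin_le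
      (f := fun t : ℝ => F (fun m => x m + t * h m) j - t * c)
      (f' := fun t : ℝ => (∑' k, D1 (fun m => x m + t * h m) j k * h k) - c)
      (C := B j)
      (fun t ht => ((hD1 j t ht).sub (hasDerivAt_mul_const c)).hasDerivWithinAt)
      (fun t ht => by
        simpa only [Real.norm_eq_abs] using hderiv_bound j t ht) h0mem h1mem
    simp only [hz0, hz1, Real.norm_eq_abs] at key
    have : |F (fun k => x k + h k) j - F x j - c| ≤ B j * 1 := by
      calc |F (fun k => x k + h k) j - F x j - c|
          = |F (fun k => x k + h k) j - 1 * c - (F x j - 0 * c)| := by ring_nf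
        _ ≤ B j * |1 - 0| := key
        _ = B j * 1 := by norm_num
    simpa using this
  -- Step C: summing up
  -- for fixed k, swap the j and l sums
  have hstep : ∀ k : ℕ, Summable (fun j => μ j * A j k) ∧
      (∑' j, μ j * A j k) ≤ KF2 * μ k * S := by
    intro k
    set f : ℕ × ℕ → ℝ := fun p => μ p.2 * v p.2 k p.1 * |h p.1| with hfdef
    have hf0 : (0 : ℕ × ℕ → ℝ) ≤ f := fun p =>
      mul_nonneg (mul_nonneg (hμ0 p.2).le (hv0 p.2 k p.1)) (abs_nonneg _)
    have hf1 : ∀ l, Summable (fun j => f (l, j)) := by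
      intro l
      have := (hvsum k l).mul_right |h l|
      simpa [hfdef] using this
    have hf2sum : Summable (fun l => (∑' j, μ j * v j k l) * |h l|) := by
      refine Summable.of_nonneg_of_le
        (fun l => mul_nonneg (tsum_nonneg fun j => mul_nonneg (hμ0 j).le (hv0 j k l)) (abs_nonneg _))
        (fun l => ?_) (hh.mul_left (KF2 * μ k))
      calc (∑' j, μ j * v j k l) * |h l| ≤ (KF2 * μ k * μ l) * |h l| :=
            mul_le_mul_of_nonneg_right (hKF2 k l) (abs_nonneg _)
        _ = KF2 * μ k * (μ l * |h l|) := by ring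
    have hf2 : Summable (fun l => ∑' j, f (l, j)) := by
      have : ∀ l, (∑' j, f (l, j)) = (∑' j, μ j * v j k l) * |h l| := by
        intro l
        rw [← tsum_mul_right]
      simpa only [this] using hf2sum
    have hgk : Summable f := (summable_prod_of_nonneg hf0).mpr ⟨hf1, hf2⟩
    have hμA_eq : ∀ j, μ j * A j k = ∑' l, f (l, j) := by
      intro j
      rw [hAdef]
      simp only
      rw [← tsum_mul_left]
      exact tsum_congr fun l => by simp [hfdef]; ring
    have hgswap : Summable (fun p : ℕ × ℕ => f (p.2, p.1)) := hgk.prod_symm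
    have hμA_sum : Summable (fun j => μ j * A j k) := by
      have h0' : (0 : ℕ × ℕ → ℝ) ≤ fun p : ℕ × ℕ => f (p.2, p.1) := fun p => hf0 (p.2, p.1)
      have := ((summable_prod_of_nonneg h0').mp hgswap).2
      simp only at this
      refine this.congr fun j => (hμA_eq j).symm
    refine ⟨hμA_sum, ?_⟩
    have hcomm : (∑' j, ∑' l, f (l, j)) = ∑' l, ∑' j, f (l, j) :=
      Summable.tsum_comm (f := fun l j => f (l, j)) hgk
    calc (∑' j, μ j * A j k) = ∑' j, ∑' l, f (l, j) := tsum_congr hμA_eq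
      _ = ∑' l, ∑' j, f (l, j) := hcomm
      _ = ∑' l, (∑' j, μ j * v j k l) * |h l| := by
          refine tsum_congr fun l => ?_
          rw [← tsum_mul_right]
      _ ≤ ∑' l, KF2 * μ k * (μ l * |h l|) := by
          refine Summable.tsum_le_tsum (fun l => ?_) hf2sum (hh.mul_left (KF2 * μ k))
          calc (∑' j, μ j * v j k l) * |h l| ≤ (KF2 * μ k * μ l) * |h l| :=
                mul_le_mul_of_nonneg_right (hKF2 k l) (abs_nonneg _)
            _ = KF2 * μ k * (μ l * |h l|) := by ring
      _ = KF2 * μ k * S := tsum_mul_left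
  -- outer swap of the j and k sums
  set G : ℕ × ℕ → ℝ := fun p => μ p.2 * A p.2 p.1 * |h p.1| with hGdef
  have hG0 : (0 : ℕ × ℕ → ℝ) ≤ G := fun p =>
    mul_nonneg (mul_nonneg (hμ0 p.2).le (hA0 p.2 p.1)) (abs_nonneg _)
  have hG1 : ∀ k, Summable (fun j => G (k, j)) := by
    intro k
    have := (hstep k).1.mul_right |h k|
    simpa [hGdef] using this
  have hG2sum : Summable (fun k => (∑' j, μ j * A j k) * |h k|) := by
    refine Summable.of_nonneg_of_le
      (fun k => mul_nonneg (tsum_nonneg fun j => mul_nonneg (hμ0 j).le (hA0 j k)) (abs_nonneg _))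
      (fun k => ?_) (hh.mul_left (KF2 * S))
    calc (∑' j, μ j * A j k) * |h k| ≤ (KF2 * μ k * S) * |h k| :=
          mul_le_mul_of_nonneg_right ((hstep k).2) (abs_nonneg _)
      _ = KF2 * S * (μ k * |h k|) := by ring
  have hG2 : Summable (fun k => ∑' j, G (k, j)) := by
    have : ∀ k, (∑' j, G (k, j)) = (∑' j, μ j * A j k) * |h k| := by
      intro k
      rw [← tsum_mul_right]
    simpa only [this] using hG2sum
  have hG : Summable G := (summable_prod_of_nonneg hG0).mpr ⟨hG1, hG2⟩
  have hμB_eq : ∀ j, μ j * B j = ∑' k, G (k, j) := by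
    intro j
    rw [hBdef]
    simp only
    rw [← tsum_mul_left]
    exact tsum_congr fun k => by simp [hGdef]; ring
  have hμB_sum : Summable (fun j => μ j * B j) := by
    have h0' : (0 : ℕ × ℕ → ℝ) ≤ fun p : ℕ × ℕ => G (p.2, p.1) := fun p => hG0 (p.2, p.1)
    have := ((summable_prod_of_nonneg h0').mp hG.prod_symm).2
    simp only at this
    refine this.congr fun j => (hμB_eq j).symm
  have hμB_le : (∑' j, μ j * B j) ≤ KF2 * S ^ 2 := by
    have hcomm : (∑' j, ∑' k, G (k, j)) = ∑' k, ∑' j, G (k, j) :=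
      Summable.tsum_comm (f := fun k j => G (k, j)) hG
    calc (∑' j, μ j * B j) = ∑' j, ∑' k, G (k, j) := tsum_congr hμB_eq
      _ = ∑' k, ∑' j, G (k, j) := hcomm
      _ = ∑' k, (∑' j, μ j * A j k) * |h k| := by
          refine tsum_congr fun k => ?_
          rw [← tsum_mul_right]
      _ ≤ ∑' k, KF2 * S * (μ k * |h k|) := by
          refine Summable.tsum_le_tsum (fun k => ?_) hG2sum (hh.mul_left (KF2 * S))
          calc (∑' j, μ j * A j k) * |h k| ≤ (KF2 * μ k * S) * |h k| :=
                mul_le_mul_of_nonneg_right ((hstep k).2) (abs_nonneg _)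
            _ = KF2 * S * (μ k * |h k|) := by ring
      _ = KF2 * S * S := tsum_mul_left
      _ = KF2 * S ^ 2 := by ring
  -- conclusion
  have hfin : Summable (fun j => μ j * |F (fun k => x k + h k) j - F x j - ∑' k, D1 x j k * h k|) := by
    refine Summable.of_nonneg_of_le (fun j => mul_nonneg (hμ0 j).le (abs_nonneg _))
      (fun j => mul_le_mul_of_nonneg_left (hRj j) (hμ0 j).le) hμB_sum
  calc ∑' j, μ j * |F (fun k => x k + h k) j - F x j - ∑' k, D1 x j k * h k|
      ≤ ∑' j, μ j * B j :=
        Summable.tsum_le_tsum (fun j => mul_le_mul_of_nonneg_left (hRj j) (hμ0 j).le) hfin hμB_sum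
    _ ≤ KF2 * S ^ 2 := hμB_le
end

section
/- Let F : ℝ_μ → ℝ_μ be defined by F^i(x) = ργ(x^{i−1} − x^i)s(x) for i ≥ 1 and F^0(x) = −ργ x^0 s(x) + κ, where s(x) = ∑_{j≥1} j x^j and μ(j) = j+1. Then F is locally Lipschitz in the μ-norm: for ‖x‖_μ, ‖y‖_μ ≤ z, ‖F(x) − F(y)‖_μ ≤ 4ργz ‖x − y‖_μ. -/
/-- `s(x) = ∑_{j≥1} j x^j`. -/
noncomputable def sFun (x : ℕ → ℝ) : ℝ := ∑' j : ℕ, (j : ℝ) * x j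

/-- The nonlinear part `F` of the drift in Arrigoni's model:
`F^0(x) = -ργ x^0 s(x) + κ` and `F^i(x) = ργ (x^{i-1} - x^i) s(x)` for `i ≥ 1`. -/
noncomputable def arrigoniF (ρ γ κ : ℝ) (x : ℕ → ℝ) : ℕ → ℝ := fun i =>
  match i with
  | 0 => -(ρ * γ) * x 0 * sFun x + κ
  | Nat.succ n => ρ * γ * (x n - x (n + 1)) * sFun x

/-! Write `Δ` for the backward difference (with `x^{-1} = 0`), so that
`F(x) = κ e₀ - ργ s(x) Δx`. Polarising with `u = x + y`, `w = x - y` gives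
`2 (F(x) - F(y)) = -ργ (s(u) Δw + s(w) Δu)`. Now `‖Δw‖_μ ≤ 2‖w‖_μ + ‖w‖₁` and
`|s(u)| ≤ ‖u‖_μ - ‖u‖₁`, and in this symmetric combination the `ℓ¹` terms only help, so
`‖F(x) - F(y)‖_μ ≤ 2ργ ‖u‖_μ ‖w‖_μ ≤ 4ργz ‖x - y‖_μ`. -/

def MuSummable (w : ℕ → ℝ) : Prop :=
  Summable fun j : ℕ => ((j : ℝ) + 1) * |w j|

noncomputable def muNorm (w : ℕ → ℝ) : ℝ :=
  ∑' j : ℕ, ((j : ℝ) + 1) * |w j|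

noncomputable def l1Norm (w : ℕ → ℝ) : ℝ :=
  ∑' j : ℕ, |w j|

def shiftRight (w : ℕ → ℝ) : ℕ → ℝ
  | 0 => 0
  | n + 1 => w n

@[simp] lemma shiftRight_zero (w : ℕ → ℝ) : shiftRight w 0 = 0 := rfl

@[simp] lemma shiftRight_succ (w : ℕ → ℝ) (n : ℕ) : shiftRight w (n + 1) = w n := rfl

def backwardDiff (w : ℕ → ℝ) : ℕ → ℝ :=
  w - shiftRight w

section WeightedNorm

variable {f u w : ℕ → ℝ}

lemma muNorm_nonneg (w : ℕ → ℝ) : 0 ≤ muNorm w :=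
  tsum_nonneg fun _ => by positivity

lemma l1Norm_nonneg (w : ℕ → ℝ) : 0 ≤ l1Norm w :=
  tsum_nonneg fun _ => abs_nonneg _

lemma MuSummable.summable_abs (hw : MuSummable w) : Summable fun j : ℕ => |w j| :=
  hw.of_nonneg_of_le (fun _ => abs_nonneg _) fun j =>
    le_mul_of_one_le_left (abs_nonneg _) (by simp)

lemma MuSummable.summable_natCast_mul_abs (hw : MuSummable w) :
    Summable fun j : ℕ => (j : ℝ) * |w j| :=
  hw.of_nonneg_of_le (fun _ => by positivity) fun j =>
    mul_le_mul_of_nonneg_right (by simp) (abs_nonneg _)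

lemma MuSummable.summable_natCast_mul (hw : MuSummable w) :
    Summable fun j : ℕ => (j : ℝ) * w j :=
  .of_abs <| hw.summable_natCast_mul_abs.congr fun j => by rw [abs_mul, Nat.abs_cast]

lemma MuSummable.of_abs_le {a b : ℝ} (hu : MuSummable u) (hw : MuSummable w)
    (h : ∀ j, |f j| ≤ a * |u j| + b * |w j|) : MuSummable f :=
  ((Summable.mul_left a hu).add (Summable.mul_left b hw)).of_nonneg_of_le
    (fun _ => by positivity) fun j => by
      linarith [mul_le_mul_of_nonneg_left (h j) (show (0 : ℝ) ≤ j + 1 by positivity)]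

lemma muNorm_le_of_abs_le {a b : ℝ} (hu : MuSummable u) (hw : MuSummable w)
    (h : ∀ j, |f j| ≤ a * |u j| + b * |w j|) :
    muNorm f ≤ a * muNorm u + b * muNorm w := by
  have ha := Summable.mul_left a hu
  have hb := Summable.mul_left b hw
  rw [muNorm, muNorm, muNorm, ← tsum_mul_left, ← tsum_mul_left, ← ha.tsum_add hb]
  refine Summable.tsum_le_tsum (fun j => ?_) (hu.of_abs_le hw h) (ha.add hb)
  linarith [mul_le_mul_of_nonneg_left (h j) (show (0 : ℝ) ≤ j + 1 by positivity)]

lemma MuSummable.add (hu : MuSummable u) (hw : MuSummable w) : MuSummable (u + w) :=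
  hu.of_abs_le (a := 1) (b := 1) hw fun j => by simpa using abs_add_le (u j) (w j)

lemma MuSummable.sub (hu : MuSummable u) (hw : MuSummable w) : MuSummable (u - w) :=
  hu.of_abs_le (a := 1) (b := 1) hw fun j => by simpa using abs_sub (u j) (w j)

lemma muNorm_add_le (hu : MuSummable u) (hw : MuSummable w) :
    muNorm (u + w) ≤ muNorm u + muNorm w := by
  simpa using muNorm_le_of_abs_le (f := u + w) (a := 1) (b := 1) hu hw
    fun j => by simpa using abs_add_le (u j) (w j)

lemma muNorm_eq_add_l1Norm (hw : MuSummable w) :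
    muNorm w = ∑' j : ℕ, (j : ℝ) * |w j| + l1Norm w := by
  rw [l1Norm, ← hw.summable_natCast_mul_abs.tsum_add hw.summable_abs]
  exact tsum_congr fun j => by ring

lemma MuSummable.shiftRight (hw : MuSummable w) : MuSummable (shiftRight w) := by
  refine (summable_nat_add_iff 1).mp <| (Summable.add hw hw.summable_abs).congr fun n => ?_
  push_cast [shiftRight_succ]
  ring

lemma muNorm_shiftRight (hw : MuSummable w) :
    muNorm (shiftRight w) = muNorm w + l1Norm w := by
  rw [muNorm, hw.shiftRight.tsum_eq_zero_add, muNorm, l1Norm, ← hw.tsum_add hw.summable_abs]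
  push_cast [shiftRight_zero, shiftRight_succ, abs_zero, mul_zero, zero_add]
  exact tsum_congr fun n => by ring

lemma MuSummable.backwardDiff (hw : MuSummable w) : MuSummable (backwardDiff w) :=
  hw.sub hw.shiftRight

lemma muNorm_backwardDiff_le (hw : MuSummable w) :
    muNorm (backwardDiff w) ≤ 2 * muNorm w + l1Norm w := by
  have := muNorm_le_of_abs_le (f := backwardDiff w) (a := 1) (b := 1) hw hw.shiftRight
    fun j => by simpa [backwardDiff] using abs_sub (w j) (shiftRight w j)
  rw [muNorm_shiftRight hw] at this
  linarith

lemma backwardDiff_add : backwardDiff (u + w) = backwardDiff u + backwardDiff w := by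
  funext i; cases i <;> simp [backwardDiff, shiftRight, add_sub_add_comm]

lemma backwardDiff_sub : backwardDiff (u - w) = backwardDiff u - backwardDiff w := by
  funext i; cases i <;> simp [backwardDiff, shiftRight, sub_sub_sub_comm]

end WeightedNorm

section FirstMoment

variable {u w : ℕ → ℝ}

lemma abs_sFun_le (hw : MuSummable w) : |sFun w| ≤ muNorm w - l1Norm w := by
  have hnorm : Summable fun j : ℕ => ‖(j : ℝ) * w j‖ := by
    simpa [abs_mul] using hw.summable_natCast_mul_abs
  calc |sFun w| ≤ ∑' j : ℕ, ‖(j : ℝ) * w j‖ := norm_tsum_le_tsum_norm hnorm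
    _ = ∑' j : ℕ, (j : ℝ) * |w j| := by simp
    _ = muNorm w - l1Norm w := by rw [muNorm_eq_add_l1Norm hw]; ring

lemma sFun_add (hu : MuSummable u) (hw : MuSummable w) : sFun (u + w) = sFun u + sFun w := by
  simp only [sFun, Pi.add_apply, mul_add]
  exact hu.summable_natCast_mul.tsum_add hw.summable_natCast_mul

lemma sFun_sub (hu : MuSummable u) (hw : MuSummable w) : sFun (u - w) = sFun u - sFun w := by
  simp only [sFun, Pi.sub_apply, mul_sub]
  exact hu.summable_natCast_mul.tsum_sub hw.summable_natCast_mul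

lemma abs_sFun_mul_add_abs_sFun_mul_le (hu : MuSummable u) (hw : MuSummable w) :
    |sFun u| * muNorm (backwardDiff w) + |sFun w| * muNorm (backwardDiff u)
      ≤ 4 * muNorm u * muNorm w := by
  have hsu := abs_sFun_le hu
  have hsw := abs_sFun_le hw
  have hu₀ := muNorm_nonneg u
  have hw₀ := muNorm_nonneg w
  have hu₁ := l1Norm_nonneg u
  have hw₁ := l1Norm_nonneg w
  calc |sFun u| * muNorm (backwardDiff w) + |sFun w| * muNorm (backwardDiff u)
      ≤ (muNorm u - l1Norm u) * (2 * muNorm w + l1Norm w)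
        + (muNorm w - l1Norm w) * (2 * muNorm u + l1Norm u) :=
        add_le_add
          (mul_le_mul hsu (muNorm_backwardDiff_le hw) (muNorm_nonneg _) ((abs_nonneg _).trans hsu))
          (mul_le_mul hsw (muNorm_backwardDiff_le hu) (muNorm_nonneg _) ((abs_nonneg _).trans hsw))
    _ ≤ 4 * muNorm u * muNorm w := by
        nlinarith [mul_nonneg hu₀ hw₁, mul_nonneg hu₁ hw₀, mul_nonneg hu₁ hw₁]

end FirstMoment

lemma arrigoniF_sub_arrigoniF (ρ γ κ : ℝ) (x y : ℕ → ℝ) (i : ℕ) :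
    arrigoniF ρ γ κ x i - arrigoniF ρ γ κ y i
      = -(ρ * γ) * (sFun x * backwardDiff x i - sFun y * backwardDiff y i) := by
  cases i <;> simp [arrigoniF, backwardDiff] <;> ring

lemma two_mul_sFun_mul_backwardDiff_sub {x y : ℕ → ℝ} (hx : MuSummable x)
    (hy : MuSummable y) (i : ℕ) :
    2 * (sFun x * backwardDiff x i - sFun y * backwardDiff y i)
      = sFun (x + y) * backwardDiff (x - y) i + sFun (x - y) * backwardDiff (x + y) i := by
  rw [sFun_add hx hy, sFun_sub hx hy, backwardDiff_add, backwardDiff_sub, Pi.add_apply,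
    Pi.sub_apply]
  ring

lemma abs_arrigoniF_sub_le {ρ γ : ℝ} (hρ : 0 ≤ ρ) (hγ : 0 ≤ γ) (κ : ℝ) {x y : ℕ → ℝ}
    (hx : MuSummable x) (hy : MuSummable y) (i : ℕ) :
    |arrigoniF ρ γ κ x i - arrigoniF ρ γ κ y i|
      ≤ ρ * γ / 2 * |sFun (x + y)| * |backwardDiff (x - y) i|
        + ρ * γ / 2 * |sFun (x - y)| * |backwardDiff (x + y) i| := by
  have hdiff : arrigoniF ρ γ κ x i - arrigoniF ρ γ κ y i
      = -(ρ * γ / 2) * (sFun (x + y) * backwardDiff (x - y) i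
        + sFun (x - y) * backwardDiff (x + y) i) := by
    rw [arrigoniF_sub_arrigoniF, ← two_mul_sFun_mul_backwardDiff_sub hx hy]
    ring
  rw [hdiff, abs_mul, abs_neg, abs_of_nonneg (by positivity), mul_assoc, mul_assoc, ← mul_add,
    ← abs_mul, ← abs_mul]
  gcongr
  exact abs_add_le _ _

lemma muNorm_arrigoniF_sub_le {ρ γ : ℝ} (hρ : 0 ≤ ρ) (hγ : 0 ≤ γ) (κ : ℝ) {x y : ℕ → ℝ}
    (hx : MuSummable x) (hy : MuSummable y) :
    muNorm (arrigoniF ρ γ κ x - arrigoniF ρ γ κ y)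
      ≤ 2 * (ρ * γ) * muNorm (x + y) * muNorm (x - y) := by
  have hu := hx.add hy
  have hw := hx.sub hy
  calc muNorm (arrigoniF ρ γ κ x - arrigoniF ρ γ κ y)
      ≤ ρ * γ / 2 * |sFun (x + y)| * muNorm (backwardDiff (x - y))
        + ρ * γ / 2 * |sFun (x - y)| * muNorm (backwardDiff (x + y)) :=
        muNorm_le_of_abs_le hw.backwardDiff hu.backwardDiff
          (abs_arrigoniF_sub_le hρ hγ κ hx hy)
    _ = ρ * γ / 2 * (|sFun (x + y)| * muNorm (backwardDiff (x - y))
        + |sFun (x - y)| * muNorm (backwardDiff (x + y))) := by ring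
    _ ≤ ρ * γ / 2 * (4 * muNorm (x + y) * muNorm (x - y)) := by
        gcongr
        exact abs_sFun_mul_add_abs_sFun_mul_le hu hw
    _ = 2 * (ρ * γ) * muNorm (x + y) * muNorm (x - y) := by ring

theorem arrigoniF_locally_lipschitz_general
    (ρ γ κ : ℝ) (hρ : 0 ≤ ρ) (hγ : 0 ≤ γ)
    (z : ℝ) (x y : ℕ → ℝ)
    (hx : Summable (fun j : ℕ => ((j : ℝ) + 1) * |x j|))
    (hy : Summable (fun j : ℕ => ((j : ℝ) + 1) * |y j|))
    (hxz : ∑' j : ℕ, ((j : ℝ) + 1) * |x j| ≤ z)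
    (hyz : ∑' j : ℕ, ((j : ℝ) + 1) * |y j| ≤ z) :
    ∑' i : ℕ, ((i : ℝ) + 1) * |arrigoniF ρ γ κ x i - arrigoniF ρ γ κ y i|
      ≤ 4 * ρ * γ * z * ∑' j : ℕ, ((j : ℝ) + 1) * |x j - y j| := by
  have hsum : muNorm (x + y) ≤ 2 * z := by
    linarith [muNorm_add_le (u := x) (w := y) hx hy, show muNorm x ≤ z from hxz,
      show muNorm y ≤ z from hyz]
  change muNorm (arrigoniF ρ γ κ x - arrigoniF ρ γ κ y) ≤ 4 * ρ * γ * z * muNorm (x - y)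
  calc muNorm (arrigoniF ρ γ κ x - arrigoniF ρ γ κ y)
      ≤ 2 * (ρ * γ) * muNorm (x + y) * muNorm (x - y) :=
        muNorm_arrigoniF_sub_le hρ hγ κ hx hy
    _ ≤ 2 * (ρ * γ) * (2 * z) * muNorm (x - y) := by
        have := muNorm_nonneg (x - y)
        gcongr
    _ = 4 * ρ * γ * z * muNorm (x - y) := by ring

theorem arrigoniF_locally_lipschitz
    (ρ γ κ : ℝ) (hρ : 0 ≤ ρ) (hγ : 0 ≤ γ) (hκ : 0 ≤ κ)
    (z : ℝ) (x y : ℕ → ℝ)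
    (hx : Summable (fun j : ℕ => ((j : ℝ) + 1) * |x j|))
    (hy : Summable (fun j : ℕ => ((j : ℝ) + 1) * |y j|))
    (hxz : ∑' j : ℕ, ((j : ℝ) + 1) * |x j| ≤ z)
    (hyz : ∑' j : ℕ, ((j : ℝ) + 1) * |y j| ≤ z) :
    ∑' i : ℕ, ((i : ℝ) + 1) * |arrigoniF ρ γ κ x i - arrigoniF ρ γ κ y i|
      ≤ 4 * ρ * γ * z * ∑' j : ℕ, ((j : ℝ) + 1) * |x j - y j| :=
  arrigoniF_locally_lipschitz_general ρ γ κ hρ hγ z x y hx hy hxz hyz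
end

section
/- Let W_t = ∑_{J∈𝒥} J W_J(A_J(t)), where (W_J) are independent standard Brownian motions, A_J : [0,T] → [0,∞) are nondecreasing with A_J(0) = 0, J ∈ ℤ^ℕ with at most J* nonzero entries each bounded in absolute value, and μ(j) ≤ ν(j)^{β₃}. Suppose ∑_J ν(J)^{−β₂−2ε} < ∞ and ∑_J ν(J)^{β₂+2β₃+4ε} A_J(T) < ∞ for some ε > 0. Then almost surely sup_{0≤t≤T} ∑_j μ(j) ∑_J |J^j| |W_J(A_J(t))| < ∞, i.e. W_t ∈ ℝ_μ for all t ∈ [0,T]. -/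
/-!
On `[0, a]` a continuous path `f` with `f 0 = 0` is dominated by its dyadic chaining sum
`∑ₘ (∑ₖ |f((k+1)a/2ᵐ) - f(ka/2ᵐ)|⁴)^{1/4}`: any dyadic point is reached from `0` using at most
one increment of each level, and continuity extends the bound to all of `[0, a]`. For a path
with Gaussian increments the level-`m` term has expectation at most `(𝔼 Z⁴)^{1/4} √a 2^{-m/4}`,
`Z ~ N(0, 1)`, by Jensen, so the chaining sum of `W_J` on `[0, A_J(T)]` has expectation
`O(√(A_J(T)))`.
Uniformly in `t ≤ T`, the weighted sum is then dominated by
`R = ∑_J J*² ν(J)^{β₃} · (chaining sum of W_J)`, and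
`𝔼 R ≲ ∑_J ν(J)^{β₃} √(A_J(T)) < ∞` since, by AM–GM, `ν^{β₃} √A` is at most half of
`ν^{-β₂-2ε} + ν^{β₂+2β₃+4ε} A`. Hence `R < ∞` almost surely.
-/

open MeasureTheory ProbabilityTheory

/-- A standard one-dimensional Brownian motion: starts at `0`, has a.s. continuous paths,
measurable coordinates, Gaussian increments `B_t - B_s ~ N(0, t - s)` for `0 ≤ s ≤ t`,
and independent increments along any monotone sequence of times. -/
structure IsStdBrownianMotion {Ω : Type*} [MeasurableSpace Ω] (P : Measure Ω)
    (B : ℝ → Ω → ℝ) : Prop where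
  meas : ∀ t, Measurable (B t)
  zero : ∀ᵐ ω ∂P, B 0 ω = 0
  cont : ∀ᵐ ω ∂P, Continuous fun t => B t ω
  gauss_incr : ∀ s t : ℝ, 0 ≤ s → s ≤ t →
    Measure.map (fun ω => B t ω - B s ω) P = gaussianReal 0 (Real.toNNReal (t - s))
  indep_incr : ∀ t : ℕ → ℝ, Monotone t → (∀ n, 0 ≤ t n) →
    iIndepFun
      (fun n ω => B (t (n + 1)) ω - B (t n) ω) P

open scoped ENNReal

open Filter Topology Finset
open scoped NNReal

noncomputable def dyadicIncrement (f : ℝ → ℝ) (a : ℝ) (m k : ℕ) : ℝ :=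
  f (a * (k + 1) / 2 ^ m) - f (a * k / 2 ^ m)

noncomputable def dyadicL4Norm (f : ℝ → ℝ) (a : ℝ) (m : ℕ) : ℝ≥0∞ :=
  (∑ k ∈ range (2 ^ m), ENNReal.ofReal (dyadicIncrement f a m k ^ 4)) ^ (4⁻¹ : ℝ)

noncomputable def dyadicChain (f : ℝ → ℝ) (a : ℝ) : ℝ≥0∞ :=
  ∑' m, dyadicL4Norm f a m

lemma ENNReal.ofReal_pow_four_rpow_inv (x : ℝ) :
    ENNReal.ofReal (x ^ 4) ^ (4⁻¹ : ℝ) = ENNReal.ofReal |x| := by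
  rw [← Even.pow_abs ⟨2, rfl⟩, ENNReal.ofReal_pow (abs_nonneg x)]
  exact_mod_cast ENNReal.pow_rpow_inv_natCast four_ne_zero _

section DyadicChaining

variable {f : ℝ → ℝ} {a : ℝ}

lemma ofReal_abs_dyadicIncrement_le {m k : ℕ} (hk : k < 2 ^ m) :
    ENNReal.ofReal |dyadicIncrement f a m k| ≤ dyadicL4Norm f a m := by
  rw [← ENNReal.ofReal_pow_four_rpow_inv, dyadicL4Norm]
  gcongr
  exact single_le_sum (f := fun k => ENNReal.ofReal (dyadicIncrement f a m k ^ 4))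
    (fun _ _ => zero_le) (mem_range.2 hk)

lemma ofReal_abs_apply_dyadic_le_sum (hf0 : f 0 = 0) (m : ℕ) :
    ∀ j : ℕ, j ≤ 2 ^ m →
      ENNReal.ofReal |f (a * j / 2 ^ m)| ≤ ∑ i ∈ range (m + 1), dyadicL4Norm f a i := by
  induction m with
  | zero =>
    intro j hj
    interval_cases j
    · simp [hf0]
    · simpa [dyadicIncrement, hf0] using ofReal_abs_dyadicIncrement_le (f := f) (a := a)
        (m := 0) (k := 0) one_pos
  | succ m ih =>
    intro j hj
    have hpow : (2 : ℝ) ^ (m + 1) = 2 * 2 ^ m := pow_succ' 2 m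
    obtain ⟨q, rfl | rfl⟩ := Nat.even_or_odd' j
    · have hpt : a * ↑(2 * q) / 2 ^ (m + 1) = a * q / 2 ^ m := by
        rw [hpow]; push_cast; field_simp
      rw [hpt, sum_range_succ]
      exact (ih q (by omega)).trans le_self_add
    · have hincr : f (a * ↑(2 * q + 1) / 2 ^ (m + 1)) =
          f (a * q / 2 ^ m) + dyadicIncrement f a (m + 1) (2 * q) := by
        rw [dyadicIncrement, hpow]; push_cast; ring_nf
      rw [hincr, sum_range_succ]
      calc ENNReal.ofReal |f (a * q / 2 ^ m) + dyadicIncrement f a (m + 1) (2 * q)|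
          ≤ ENNReal.ofReal |f (a * q / 2 ^ m)| +
              ENNReal.ofReal |dyadicIncrement f a (m + 1) (2 * q)| :=
            (ENNReal.ofReal_le_ofReal (abs_add_le _ _)).trans ENNReal.ofReal_add_le
        _ ≤ _ := add_le_add (ih q (by omega)) (ofReal_abs_dyadicIncrement_le (by omega))

lemma tendsto_nat_floor_mul_two_pow_div_two_pow {t : ℝ} (ht : 0 ≤ t) :
    Tendsto (fun m : ℕ => (⌊t * 2 ^ m⌋₊ : ℝ) / 2 ^ m) atTop (𝓝 t) :=
  (tendsto_nat_floor_mul_div_atTop ht).comp (tendsto_pow_atTop_atTop_of_one_lt one_lt_two)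

theorem ofReal_abs_le_dyadicChain (hf : Continuous f) (hf0 : f 0 = 0) {s : ℝ}
    (hs : s ∈ Set.Icc 0 a) : ENNReal.ofReal |f s| ≤ dyadicChain f a := by
  obtain rfl | ha := eq_or_lt_of_le (hs.1.trans hs.2)
  · simp [le_antisymm hs.2 hs.1, hf0]
  have hclosed : IsClosed {x | ENNReal.ofReal |f x| ≤ dyadicChain f a} :=
    isClosed_le (ENNReal.continuous_ofReal.comp (continuous_abs.comp hf)) continuous_const
  have hlim : Tendsto (fun m : ℕ => a * ⌊s / a * 2 ^ m⌋₊ / 2 ^ m) atTop (𝓝 s) := by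
    simpa [mul_div_assoc, mul_div_cancel₀ s ha.ne'] using
      (tendsto_nat_floor_mul_two_pow_div_two_pow (div_nonneg hs.1 ha.le)).const_mul a
  refine hclosed.mem_of_tendsto hlim (Eventually.of_forall fun m => ?_)
  have hj : ⌊s / a * 2 ^ m⌋₊ ≤ 2 ^ m := Nat.floor_le_of_le <| by
    push_cast
    exact mul_le_of_le_one_left (by positivity) ((div_le_one ha).2 hs.2)
  exact (ofReal_abs_apply_dyadic_le_sum hf0 m _ hj).trans (ENNReal.sum_le_tsum _)

end DyadicChaining

noncomputable def gaussianFourthMoment : ℝ≥0∞ :=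
  ∫⁻ x, ENNReal.ofReal (x ^ 4) ∂gaussianReal 0 1

lemma gaussianFourthMoment_ne_top : gaussianFourthMoment ≠ ∞ := by
  have h := (memLp_id_gaussianReal (μ := 0) (v := 1) 4).integrable_norm_pow four_ne_zero
  simpa [gaussianFourthMoment, Real.norm_eq_abs, Even.pow_abs ⟨2, rfl⟩] using
    h.lintegral_lt_top.ne

lemma lintegral_ofReal_pow_four_of_map_eq_gaussianReal {Ω : Type*} [MeasurableSpace Ω]
    {P : Measure Ω} {X : Ω → ℝ} (hX : Measurable X) {v : ℝ≥0}
    (hmap : P.map X = gaussianReal 0 v) :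
    ∫⁻ ω, ENNReal.ofReal (X ω ^ 4) ∂P = (v : ℝ≥0∞) ^ 2 * gaussianFourthMoment := by
  have hscale : gaussianReal 0 v = (gaussianReal 0 1).map (√(v : ℝ) * ·) := by
    rw [gaussianReal_map_const_mul, mul_zero, mul_one]
    congr
    ext
    simp
  rw [← lintegral_map (f := fun x : ℝ => ENNReal.ofReal (x ^ 4)) (by fun_prop) hX, hmap, hscale,
    lintegral_map (by fun_prop) (by fun_prop), gaussianFourthMoment, ← lintegral_const_mul _ (by fun_prop)]
  refine lintegral_congr fun x => ?_
  rw [mul_pow, ENNReal.ofReal_mul (by positivity), show √(v : ℝ) ^ 4 = (v : ℝ) ^ 2 by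
    rw [show 4 = 2 * 2 from rfl, pow_mul, Real.sq_sqrt v.coe_nonneg]]
  simp [ENNReal.ofReal_pow]

lemma lintegral_rpow_inv_le_rpow_inv_lintegral {Ω : Type*} [MeasurableSpace Ω] {P : Measure Ω}
    [IsProbabilityMeasure P] {g : Ω → ℝ≥0∞} (hg : AEMeasurable g P) {p : ℝ} (hp : 1 < p) :
    ∫⁻ ω, g ω ^ p⁻¹ ∂P ≤ (∫⁻ ω, g ω ∂P) ^ p⁻¹ := by
  have h := ENNReal.lintegral_mul_le_Lp_mul_Lq P (Real.HolderConjugate.conjExponent hp)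
    (hg.pow_const p⁻¹) (aemeasurable_const (b := 1))
  have hcancel : ∀ ω, (g ω ^ p⁻¹) ^ p = g ω := fun ω => by
    rw [← ENNReal.rpow_mul, inv_mul_cancel₀ (by positivity), ENNReal.rpow_one]
  simpa [hcancel] using h

noncomputable def dyadicChainConst : ℝ≥0∞ :=
  gaussianFourthMoment ^ (4⁻¹ : ℝ) * ENNReal.ofReal (1 - 2 ^ (-4⁻¹ : ℝ))⁻¹

lemma dyadicChainConst_ne_top : dyadicChainConst ≠ ∞ :=
  ENNReal.mul_ne_top (ENNReal.rpow_ne_top_of_nonneg (by norm_num) gaussianFourthMoment_ne_top)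
    ENNReal.ofReal_ne_top

section GaussianIncrements

variable {Ω : Type*} [MeasurableSpace Ω] {P : Measure Ω} {B : ℝ → Ω → ℝ}

lemma measurable_dyadicIncrement (hB : ∀ t, Measurable (B t)) (a : ℝ) (m k : ℕ) :
    Measurable fun ω => dyadicIncrement (B · ω) a m k :=
  (hB _).sub (hB _)

lemma measurable_dyadicL4Norm (hB : ∀ t, Measurable (B t)) (a : ℝ) (m : ℕ) :
    Measurable fun ω => dyadicL4Norm (B · ω) a m :=
  (Finset.measurable_sum _ fun _ _ =>
    ((measurable_dyadicIncrement hB a m _).pow_const 4).ennreal_ofReal).pow_const _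

lemma measurable_dyadicChain (hB : ∀ t, Measurable (B t)) (a : ℝ) :
    Measurable fun ω => dyadicChain (B · ω) a :=
  .tsum fun m => measurable_dyadicL4Norm hB a m

lemma lintegral_dyadicL4Norm_le [IsProbabilityMeasure P] (hB : ∀ t, Measurable (B t))
    (hinc : ∀ s t : ℝ, 0 ≤ s → s ≤ t →
      P.map (fun ω => B t ω - B s ω) = gaussianReal 0 (t - s).toNNReal)
    {a : ℝ} (ha : 0 ≤ a) (m : ℕ) :
    ∫⁻ ω, dyadicL4Norm (B · ω) a m ∂P ≤
      gaussianFourthMoment ^ (4⁻¹ : ℝ) * ENNReal.ofReal (√a * (2 ^ (-4⁻¹ : ℝ)) ^ m) := by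
  have hmeas : ∀ k, Measurable fun ω => ENNReal.ofReal (dyadicIncrement (B · ω) a m k ^ 4) :=
    fun k => ((measurable_dyadicIncrement hB a m k).pow_const 4).ennreal_ofReal
  have hmoment : ∀ k : ℕ, ∫⁻ ω, ENNReal.ofReal (dyadicIncrement (B · ω) a m k ^ 4) ∂P =
      ENNReal.ofReal (a / 2 ^ m) ^ 2 * gaussianFourthMoment := fun k =>
    lintegral_ofReal_pow_four_of_map_eq_gaussianReal (v := (a / 2 ^ m).toNNReal)
      (measurable_dyadicIncrement hB a m k) <| by
      simp only [dyadicIncrement]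
      rw [hinc _ _ (by positivity) (by gcongr; linarith)]
      congr 2
      ring
  have hsum : ∫⁻ ω, ∑ k ∈ range (2 ^ m), ENNReal.ofReal (dyadicIncrement (B · ω) a m k ^ 4) ∂P =
      ENNReal.ofReal (2 ^ m * (a / 2 ^ m) ^ 2) * gaussianFourthMoment := by
    rw [lintegral_finsetSum _ fun k _ => hmeas k, sum_congr rfl fun k _ => hmoment k, sum_const,
      card_range, nsmul_eq_mul, ← mul_assoc, ENNReal.ofReal_mul (by positivity),
      ENNReal.ofReal_pow (div_nonneg ha (by positivity))]
    norm_cast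
  have halg : (2 : ℝ) ^ m * (a / 2 ^ m) ^ 2 = (√a * (2 ^ (-4⁻¹ : ℝ)) ^ m) ^ 4 := by
    have hq4 : ((2 : ℝ) ^ (-4⁻¹ : ℝ)) ^ 4 = 2⁻¹ := by
      rw [← Real.rpow_natCast, ← Real.rpow_mul zero_le_two]
      norm_num
    rw [mul_pow, ← pow_mul, mul_comm m, pow_mul, hq4,
      show (√a) ^ 4 = a ^ 2 by rw [show 4 = 2 * 2 from rfl, pow_mul, Real.sq_sqrt ha], inv_pow]
    field_simp
  calc ∫⁻ ω, dyadicL4Norm (B · ω) a m ∂P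
      ≤ (∫⁻ ω, ∑ k ∈ range (2 ^ m), ENNReal.ofReal (dyadicIncrement (B · ω) a m k ^ 4) ∂P)
          ^ (4⁻¹ : ℝ) :=
        lintegral_rpow_inv_le_rpow_inv_lintegral
          (Finset.measurable_sum _ fun k _ => hmeas k).aemeasurable (by norm_num)
    _ = _ := by
      rw [hsum, halg, ENNReal.mul_rpow_of_nonneg _ _ (by norm_num),
        ENNReal.ofReal_pow_four_rpow_inv, abs_of_nonneg (by positivity), mul_comm]

theorem lintegral_dyadicChain_le [IsProbabilityMeasure P] (hB : ∀ t, Measurable (B t))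
    (hinc : ∀ s t : ℝ, 0 ≤ s → s ≤ t →
      P.map (fun ω => B t ω - B s ω) = gaussianReal 0 (t - s).toNNReal)
    {a : ℝ} (ha : 0 ≤ a) :
    ∫⁻ ω, dyadicChain (B · ω) a ∂P ≤ dyadicChainConst * ENNReal.ofReal √a := by
  have hq0 : (0 : ℝ) ≤ 2 ^ (-4⁻¹ : ℝ) := by positivity
  have hq1 : (2 : ℝ) ^ (-4⁻¹ : ℝ) < 1 := Real.rpow_lt_one_of_one_lt_of_neg one_lt_two (by norm_num)
  calc ∫⁻ ω, dyadicChain (B · ω) a ∂P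
      = ∑' m, ∫⁻ ω, dyadicL4Norm (B · ω) a m ∂P :=
        lintegral_tsum fun m => (measurable_dyadicL4Norm hB a m).aemeasurable
    _ ≤ ∑' m : ℕ, gaussianFourthMoment ^ (4⁻¹ : ℝ) * ENNReal.ofReal (√a * (2 ^ (-4⁻¹ : ℝ)) ^ m) :=
        ENNReal.tsum_le_tsum fun m => lintegral_dyadicL4Norm_le hB hinc ha m
    _ = dyadicChainConst * ENNReal.ofReal √a := by
      rw [ENNReal.tsum_mul_left, ← ENNReal.ofReal_tsum_of_nonneg (fun m => by positivity)
        ((summable_geometric_of_lt_one hq0 hq1).mul_left _), tsum_mul_left,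
        tsum_geometric_of_lt_one hq0 hq1, dyadicChainConst, ENNReal.ofReal_mul (Real.sqrt_nonneg _)]
      ring

end GaussianIncrements

theorem lintegral_tsum_mul_dyadicChain_ne_top {Ω ι : Type*} [MeasurableSpace Ω] {P : Measure Ω}
    [IsProbabilityMeasure P] [Countable ι] {B : ι → ℝ → Ω → ℝ}
    (hB : ∀ i t, Measurable (B i t))
    (hinc : ∀ i, ∀ s t : ℝ, 0 ≤ s → s ≤ t →
      P.map (fun ω => B i t ω - B i s ω) = gaussianReal 0 (t - s).toNNReal)
    {a c : ι → ℝ} (ha : ∀ i, 0 ≤ a i) (hsum : Summable fun i => c i * √(a i)) :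
    ∫⁻ ω, ∑' i, ENNReal.ofReal (c i) * dyadicChain (B i · ω) (a i) ∂P ≠ ∞ := by
  refine ne_top_of_le_ne_top (ENNReal.mul_ne_top dyadicChainConst_ne_top hsum.tsum_ofReal_ne_top) ?_
  calc ∫⁻ ω, ∑' i, ENNReal.ofReal (c i) * dyadicChain (B i · ω) (a i) ∂P
      = ∑' i, ENNReal.ofReal (c i) * ∫⁻ ω, dyadicChain (B i · ω) (a i) ∂P := by
        rw [lintegral_tsum fun i => ((measurable_dyadicChain (hB i) _).const_mul _).aemeasurable]
        exact tsum_congr fun i => lintegral_const_mul _ (measurable_dyadicChain (hB i) _)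
    _ ≤ ∑' i, ENNReal.ofReal (c i) * (dyadicChainConst * ENNReal.ofReal √(a i)) := by
        gcongr with i
        exact lintegral_dyadicChain_le (hB i) (hinc i) (ha i)
    _ = dyadicChainConst * ∑' i, ENNReal.ofReal (c i * √(a i)) := by
        rw [← ENNReal.tsum_mul_left]
        refine tsum_congr fun i => ?_
        rw [ENNReal.ofReal_mul' (Real.sqrt_nonneg _)]
        ring

lemma tsum_ofReal_mul_abs_le {α : Type*} {v : α → ℤ} {N : ℕ} (hfin : (Function.support v).Finite)
    (hcard : hfin.toFinset.card ≤ N) (hbnd : ∀ j, |v j| ≤ N) {w : α → ℝ} {c : ℝ}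
    (hw : ∀ j, v j ≠ 0 → w j ≤ c) :
    ∑' j, ENNReal.ofReal (w j) * ENNReal.ofReal |(v j : ℝ)| ≤ ENNReal.ofReal (N ^ 2 * c) := by
  have hsupp : Function.support (fun j => ENNReal.ofReal (w j) * ENNReal.ofReal |(v j : ℝ)|) ⊆
      hfin.toFinset := by
    intro j hj
    contrapose! hj
    simp_all
  have hterm : ∀ j ∈ hfin.toFinset,
      ENNReal.ofReal (w j) * ENNReal.ofReal |(v j : ℝ)| ≤ ENNReal.ofReal c * N := by
    intro j hj
    rw [← ENNReal.ofReal_natCast]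
    exact mul_le_mul' (ENNReal.ofReal_le_ofReal (hw j (by simpa using hj)))
      (ENNReal.ofReal_le_ofReal (by exact_mod_cast hbnd j))
  calc ∑' j, ENNReal.ofReal (w j) * ENNReal.ofReal |(v j : ℝ)|
      = ∑ j ∈ hfin.toFinset, ENNReal.ofReal (w j) * ENNReal.ofReal |(v j : ℝ)| := tsum_eq_sum' hsupp
    _ ≤ hfin.toFinset.card • (ENNReal.ofReal c * N) := sum_le_card_nsmul _ _ _ hterm
    _ ≤ N • (ENNReal.ofReal c * N) := nsmul_le_nsmul_left zero_le hcard
    _ = ENNReal.ofReal (N ^ 2 * c) := by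
      rw [ENNReal.ofReal_mul (by positivity), nsmul_eq_mul, ENNReal.ofReal_pow (Nat.cast_nonneg N),
        ENNReal.ofReal_natCast]
      ring

lemma rpow_mul_sqrt_le {x y β₂ β₃ ε : ℝ} (hx : 1 ≤ x) (hy : 0 ≤ y) (hε : 0 ≤ ε) :
    x ^ β₃ * √y ≤ (x ^ (-β₂ - 2 * ε) + x ^ (β₂ + 2 * β₃ + 4 * ε) * y) / 2 := by
  have hx0 : 0 < x := zero_lt_one.trans_le hx
  set p := x ^ (-β₂ - 2 * ε)
  set q := x ^ (β₂ + 2 * β₃ + 4 * ε) * y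
  have hsq : (x ^ β₃ * √y) ^ 2 = x ^ (2 * β₃) * y := by
    rw [mul_pow, Real.sq_sqrt hy, ← Real.rpow_natCast, ← Real.rpow_mul hx0.le, mul_comm β₃]
    norm_num
  have hpq : p * q = x ^ (2 * β₃ + 2 * ε) * y := by
    rw [← mul_assoc, ← Real.rpow_add hx0]
    ring_nf
  have hle : x ^ (2 * β₃) * y ≤ p * q := by
    rw [hpq]
    gcongr
    linarith
  refine (pow_le_pow_iff_left₀ (by positivity) (by positivity) two_ne_zero).1 ?_
  rw [hsq]
  nlinarith [sq_nonneg (p - q)]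

lemma summable_rpow_mul_sqrt {ι : Type*} {x y : ι → ℝ} {β₂ β₃ ε : ℝ} (hx : ∀ i, 1 ≤ x i)
    (hy : ∀ i, 0 ≤ y i) (hε : 0 ≤ ε) (h₁ : Summable fun i => x i ^ (-β₂ - 2 * ε))
    (h₂ : Summable fun i => x i ^ (β₂ + 2 * β₃ + 4 * ε) * y i) :
    Summable fun i => x i ^ β₃ * √(y i) :=
  ((h₁.add h₂).div_const 2).of_nonneg_of_le
    (fun i => mul_nonneg (Real.rpow_nonneg (zero_le_one.trans (hx i)) _) (Real.sqrt_nonneg _))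
    fun i => rpow_mul_sqrt_le (hx i) (hy i) hε

lemma tsum_mul_tsum_le_tsum_mul {α β : Type*} (a : α → ℝ≥0∞) {b x : β → α → ℝ≥0∞}
    {g : β → ℝ≥0∞} (h : ∀ i j, x i j ≤ b i j * g i) :
    ∑' j, a j * ∑' i, x i j ≤ ∑' i, (∑' j, a j * b i j) * g i :=
  calc ∑' j, a j * ∑' i, x i j
      ≤ ∑' j, a j * ∑' i, b i j * g i := by
        gcongr with j i
        exact h i j
    _ = ∑' i, (∑' j, a j * b i j) * g i := by
        simp_rw [← ENNReal.tsum_mul_left, ← ENNReal.tsum_mul_right, mul_assoc]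
        exact ENNReal.tsum_comm

theorem driving_diffusion_in_weighted_l1_general
    {Ω : Type*} [MeasurableSpace Ω] (P : Measure Ω) [IsProbabilityMeasure P]
    {ι : Type*} [Countable ι]
    -- independent standard Brownian motions (W_J)
    (W : ι → ℝ → Ω → ℝ) (hW : ∀ J, IsStdBrownianMotion P (W J))
    -- time changes A_J
    (T : ℝ)
    (A : ι → ℝ → ℝ) (hApos : ∀ J t, 0 ≤ A J t)
    (hAmono : ∀ J, MonotoneOn (A J) (Set.Icc (0:ℝ) T))
    -- jump vectors with at most Jstar nonzero entries, each bounded by Jstar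
    (Jv : ι → ℕ → ℤ) (Jstar : ℕ)
    (hJsupp : ∀ J, (Function.support (Jv J)).Finite ∧
      ∀ (h : (Function.support (Jv J)).Finite), h.toFinset.card ≤ Jstar)
    (hJbnd : ∀ J j, |Jv J j| ≤ (Jstar : ℤ))
    -- weights
    (ν : ℕ → ℝ) (hν : ∀ j, 1 ≤ ν j)
    (νJ : ι → ℝ) (hνJ1 : ∀ J, 1 ≤ νJ J)
    (hνJ : ∀ J j, Jv J j ≠ 0 → ν j ≤ νJ J)
    (μ : ℕ → ℝ)
    (β₂ β₃ ε : ℝ) (hβ₃ : 0 ≤ β₃) (hε : 0 < ε)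
    (hμν : ∀ j, μ j ≤ ν j ^ β₃)
    (hsum1 : Summable (fun J : ι => νJ J ^ (-β₂ - 2 * ε)))
    (hsum2 : Summable (fun J : ι => νJ J ^ (β₂ + 2 * β₃ + 4 * ε) * A J T)) :
    ∀ᵐ ω ∂P,
      (⨆ t ∈ Set.Icc (0:ℝ) T, ∑' j : ℕ, ENNReal.ofReal (μ j) *
        ∑' J : ι, ENNReal.ofReal (|(Jv J j : ℝ)| * |W J (A J t) ω|)) < ⊤ := by
  set c : ι → ℝ := fun J => Jstar ^ 2 * νJ J ^ β₃
  have hweight : ∀ J, ∑' j, ENNReal.ofReal (μ j) * ENNReal.ofReal |(Jv J j : ℝ)| ≤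
      ENNReal.ofReal (c J) := fun J =>
    tsum_ofReal_mul_abs_le (hJsupp J).1 ((hJsupp J).2 _) (hJbnd J) fun j hj =>
      (hμν j).trans (Real.rpow_le_rpow (zero_le_one.trans (hν j)) (hνJ J j hj) hβ₃)
  have hsum : Summable fun J => c J * √(A J T) := by
    simpa only [c, mul_assoc] using (summable_rpow_mul_sqrt hνJ1 (fun J => hApos J T) hε.le
      hsum1 hsum2).mul_left ((Jstar : ℝ) ^ 2)
  have hbound : ∀ᵐ ω ∂P, ∑' J, ENNReal.ofReal (c J) * dyadicChain (W J · ω) (A J T) < ∞ :=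
    ae_lt_top (.tsum fun J => (measurable_dyadicChain (hW J).meas _).const_mul _)
      (lintegral_tsum_mul_dyadicChain_ne_top (fun J => (hW J).meas) (fun J => (hW J).gauss_incr)
        (fun J => hApos J T) hsum)
  have hpaths : ∀ᵐ ω ∂P, ∀ J, W J 0 ω = 0 ∧ Continuous (W J · ω) :=
    ae_all_iff.2 fun J => (hW J).zero.and (hW J).cont
  filter_upwards [hpaths, hbound] with ω hω hboundω
  refine lt_of_le_of_lt (iSup₂_le fun t ht => ?_) hboundω
  refine (tsum_mul_tsum_le_tsum_mul _ fun J j => ?_).trans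
    (ENNReal.tsum_le_tsum fun J => mul_le_mul_left (hweight J) _)
  rw [ENNReal.ofReal_mul (abs_nonneg _)]
  gcongr
  exact ofReal_abs_le_dyadicChain (hω J).2 (hω J).1
    ⟨hApos J t, hAmono J ⟨ht.1, ht.2⟩ ⟨ht.1.trans ht.2, le_rfl⟩ ht.2⟩

theorem driving_diffusion_in_weighted_l1
    {Ω : Type*} [MeasurableSpace Ω] (P : Measure Ω) [IsProbabilityMeasure P]
    {ι : Type*} [Countable ι]
    -- independent standard Brownian motions (W_J)
    (W : ι → ℝ → Ω → ℝ) (hW : ∀ J, IsStdBrownianMotion P (W J))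
    (hindep : iIndepFun
      (fun J ω t => W J t ω) P)
    -- time changes A_J
    (T : ℝ) (hT : 0 < T)
    (A : ι → ℝ → ℝ) (hA0 : ∀ J, A J 0 = 0) (hApos : ∀ J t, 0 ≤ A J t)
    (hAmono : ∀ J, MonotoneOn (A J) (Set.Icc (0:ℝ) T))
    -- jump vectors with at most Jstar nonzero entries, each bounded by Jstar
    (Jv : ι → ℕ → ℤ) (Jstar : ℕ)
    (hJsupp : ∀ J, (Function.support (Jv J)).Finite ∧
      ∀ (h : (Function.support (Jv J)).Finite), h.toFinset.card ≤ Jstar)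
    (hJbnd : ∀ J j, |Jv J j| ≤ (Jstar : ℤ))
    -- weights
    (ν : ℕ → ℝ) (hν : ∀ j, 1 ≤ ν j)
    (νJ : ι → ℝ) (hνJ1 : ∀ J, 1 ≤ νJ J)
    (hνJ : ∀ J j, Jv J j ≠ 0 → ν j ≤ νJ J)
    (μ : ℕ → ℝ) (hμpos : ∀ j, 0 ≤ μ j)
    (β₂ β₃ ε : ℝ) (hβ₃ : 0 ≤ β₃) (hε : 0 < ε)
    (hμν : ∀ j, μ j ≤ ν j ^ β₃)
    (hsum1 : Summable (fun J : ι => νJ J ^ (-β₂ - 2 * ε)))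
    (hsum2 : Summable (fun J : ι => νJ J ^ (β₂ + 2 * β₃ + 4 * ε) * A J T)) :
    ∀ᵐ ω ∂P,
      (⨆ t ∈ Set.Icc (0:ℝ) T, ∑' j : ℕ, ENNReal.ofReal (μ j) *
        ∑' J : ι, ENNReal.ofReal (|(Jv J j : ℝ)| * |W J (A J t) ω|)) < ⊤ :=
  driving_diffusion_in_weighted_l1_general P W hW T A hApos hAmono Jv Jstar hJsupp hJbnd ν hν νJ
    hνJ1 hνJ μ β₂ β₃ ε hβ₃ hε hμν hsum1 hsum2
end
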